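/- arXiv:2103.05694 — 3 statements merged into one kernel-verified Lean document; each statement's English description precedes it below -/
import Mathlib

section
/- Every maximal sequence of nontrivial updates starting from the top state is finite: there is no infinite sequence f_0, f_1, f_2, ... of states with f_i = D(n_i, f_{i-1}) and f_i ≠ f_{i-1} for all i ≥ 1, where f_0 is the state mapping every node to the maximum element of τ. -/
/-- Every maximal sequence of nontrivial updates starting from the top state is
finite: there is no infinite sequence of states, each obtained from the previous
by a nontrivial local update, starting from the state mapping every node to ⊤. -/
theorem no_infinite_nontrivial_update_sequence
    {N τ : Type*} [Fintype N] [Nonempty N] [DecidableEq N]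
    [LinearOrder τ] [OrderTop τ]
    (D : N → (N → τ) → (N → τ))
    (hlocal : ∀ (n : N) (f : N → τ) (m : N), m ≠ n → D n f m = f m)
    (hmono : ∀ (n : N) (f : N → τ), D n f n ≤ f n)
    (hcausal : ∀ (n : N) (f g : N → τ),
      {u : N | u ≠ n ∧ f u < D n f n} = {u : N | u ≠ n ∧ g u < D n g n} →
      (∀ u : N, u ≠ n → f u < D n f n → f u = g u) →
      D n f n = D n g n) :
    ¬ ∃ (f : ℕ → N → τ) (n : ℕ → N),
        f 0 = (fun _ => ⊤) ∧
        ∀ i : ℕ, f (i + 1) = D (n i) (f i) ∧ f (i + 1) ≠ f i := by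
  classical
  rintro ⟨f, n, h0, hstep⟩
  have hupd : ∀ i, f (i + 1) = D (n i) (f i) := fun i => (hstep i).1
  have hne : ∀ i, f (i + 1) ≠ f i := fun i => (hstep i).2
  have hkeep : ∀ i (x : N), x ≠ n i → f (i + 1) x = f i x := by
    intro i x hx; rw [hupd i]; exact hlocal (n i) (f i) x hx
  have hdec : ∀ i, f (i + 1) (n i) < f i (n i) := by
    intro i
    have hle : f (i + 1) (n i) ≤ f i (n i) := by rw [hupd i]; exact hmono _ _
    rcases lt_or_eq_of_le hle with h | h
    · exact h
    · exact absurd (funext fun x => by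
        by_cases hx : x = n i
        · rw [hx]; exact h
        · exact hkeep i x hx) (hne i)
  have hanti : ∀ x : N, Antitone fun i => f i x := by
    intro x
    apply antitone_nat_of_succ_le
    intro i
    by_cases hx : x = n i
    · rw [hx]; exact (hdec i).le
    · exact (hkeep i x hx).le
  -- the set of nodes updated infinitely often
  set T : Finset N := Finset.univ.filter (fun x => {i | n i = x}.Infinite) with hT
  have hTmem : ∀ x, x ∈ T ↔ {i | n i = x}.Infinite := by
    intro x; simp [hT]
  have hTne : T.Nonempty := by
    obtain ⟨y, hy⟩ := Finite.exists_infinite_fiber n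
    refine ⟨y, (hTmem y).2 ?_⟩
    have : (n ⁻¹' {y}).Infinite := Set.infinite_coe_iff.mp hy
    simpa [Set.preimage] using this
  -- a time after which only nodes in T are updated
  have hBfin : {i | n i ∉ T}.Finite := by
    have hsub : {i | n i ∉ T} ⊆ ⋃ x ∈ {x : N | x ∉ T}, {i | n i = x} := by
      intro i hi
      exact Set.mem_biUnion hi rfl
    refine Set.Finite.subset (Set.Finite.biUnion (Set.toFinite _) ?_) hsub
    intro x hx
    exact Set.not_infinite.mp (fun h => hx ((hTmem x).2 h))
  obtain ⟨b, hb⟩ := hBfin.bddAbove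
  set t0 := b + 1 with ht0def
  have hnT : ∀ i, t0 ≤ i → n i ∈ T := by
    intro i hi
    by_contra h
    have := hb (Set.mem_setOf_eq ▸ h : i ∈ {i | n i ∉ T})
    omega
  have hfix : ∀ u, u ∉ T → ∀ i, t0 ≤ i → f i u = f t0 u := by
    intro u hu i hi
    induction i, hi using Nat.le_induction with
    | base => rfl
    | succ i hi ih =>
      rw [← ih]
      exact hkeep i u (fun h => hu (by rw [h]; exact hnT i hi))
  -- the running minimum over T
  have hTim : ∀ i, (T.image (f i)).Nonempty := fun i => hTne.image _
  set m : ℕ → τ := fun i => (T.image (f i)).min' (hTim i) with hm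
  have hmle : ∀ i (x : N), x ∈ T → m i ≤ f i x := fun i x hx =>
    Finset.min'_le _ _ (Finset.mem_image_of_mem _ hx)
  have hmex : ∀ i, ∃ x ∈ T, f i x = m i := by
    intro i
    have := Finset.min'_mem (T.image (f i)) (hTim i)
    simpa [Finset.mem_image] using this
  have hmanti : Antitone m := by
    intro i j hij
    obtain ⟨x, hx, hfx⟩ := hmex i
    calc m j ≤ f j x := hmle j x hx
      _ ≤ f i x := hanti x hij
      _ = m i := hfx
  -- upwind sets of below-the-min updates only involve frozen nodes
  set φ : τ → Set N := fun v => {u : N | u ∉ T ∧ f t0 u < v} with hφ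
  have hupw : ∀ i, t0 ≤ i → f (i + 1) (n i) < m i →
      {u : N | u ≠ n i ∧ f i u < D (n i) (f i) (n i)} = φ (f (i + 1) (n i)) := by
    intro i hi hlt
    have hD : D (n i) (f i) (n i) = f (i + 1) (n i) := by rw [hupd i]
    ext u
    simp only [hφ, Set.mem_setOf_eq, hD]
    constructor
    · rintro ⟨hu, hult⟩
      have huT : u ∉ T := by
        intro huT
        exact absurd (hult.trans hlt) (not_lt.mpr (hmle i u huT))
      refine ⟨huT, ?_⟩
      rwa [hfix u huT i hi] at hult
    · rintro ⟨huT, hlt'⟩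
      refine ⟨fun h => huT (by rw [h]; exact hnT i hi), ?_⟩
      rwa [hfix u huT i hi]
  -- the set of values produced by below-the-min updates is finite, by causality
  set Vlow : Set τ :=
    ⋃ x : N, {v : τ | ∃ i, t0 ≤ i ∧ n i = x ∧ f (i + 1) (n i) = v ∧ v < m i} with hVlow
  have hVfin : Vlow.Finite := by
    apply Set.finite_iUnion
    intro x
    refine Set.Finite.of_finite_image (f := φ) (Set.toFinite _) ?_
    rintro v ⟨i, hi, hni, hvi, hvm⟩ v' ⟨j, hj, hnj, hvj, hvm'⟩ hφeq
    subst hni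
    have hlti : f (i + 1) (n i) < m i := by rw [hvi]; exact hvm
    have hltj : f (j + 1) (n j) < m j := by rw [hvj]; exact hvm'
    have e1 := hupw i hi hlti
    have e2 := hupw j hj hltj
    rw [hvi] at e1
    rw [hvj] at e2
    have hv : D (n i) (f i) (n i) = v := by rw [← hupd i]; exact hvi
    have hv' : D (n i) (f j) (n i) = v' := by
      rw [← hnj, ← hupd j]; exact hvj
    rw [hnj] at e2
    have key : D (n i) (f i) (n i) = D (n i) (f j) (n i) := by
      apply hcausal
      · rw [e1, hφeq, ← e2]
      · intro u hu hult
        have humem : u ∈ φ v := by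
          rw [← e1]
          exact ⟨hu, hult⟩
        have huT : u ∉ T := humem.1
        rw [hfix u huT i hi, hfix u huT j hj]
    rw [← hv, ← hv', key]
  -- hence the minimum takes only finitely many values
  have hmmem : ∀ i, t0 ≤ i → m i ∈ insert (m t0) Vlow := by
    intro i hi
    induction i, hi using Nat.le_induction with
    | base => exact Set.mem_insert _ _
    | succ i hi ih =>
      rcases eq_or_lt_of_le (hmanti (Nat.le_succ i)) with h | h
      · rw [h]; exact ih
      · obtain ⟨x, hx, hfx⟩ := hmex (i + 1)
        have hxn : x = n i := by
          by_contra hxn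
          have hkx := hkeep i x hxn
          have h2 : m i ≤ f i x := hmle i x hx
          rw [← hkx, hfx] at h2
          exact absurd h h2.not_gt
        refine Set.mem_insert_iff.mpr (Or.inr ?_)
        refine Set.mem_iUnion.mpr ⟨n i, i, hi, rfl, ?_, h⟩
        rw [← hxn]; exact hfx
  have hSfin : {w : τ | ∃ i, t0 ≤ i ∧ m i = w}.Finite := by
    refine (hVfin.insert (m t0)).subset ?_
    rintro w ⟨i, hi, rfl⟩
    exact hmmem i hi
  have hSne : {w : τ | ∃ i, t0 ≤ i ∧ m i = w}.Nonempty := ⟨m t0, t0, le_rfl, rfl⟩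
  obtain ⟨w, ⟨t1, ht1, hwt1⟩, hwmin⟩ := Set.exists_min_image _ id hSfin hSne
  -- the node achieving the minimum at t1 is updated again, a contradiction
  obtain ⟨x, hxT, hfx⟩ := hmex t1
  obtain ⟨j, hjx, hjt⟩ := ((hTmem x).1 hxT).exists_gt t1
  have hjx' : n j = x := hjx
  have ht0j : t0 ≤ j := le_trans ht1 hjt.le
  have hfj_le : f j x ≤ w := by
    calc f j x ≤ f t1 x := hanti x hjt.le
      _ = w := by rw [hfx, hwt1]
  have hmj : w ≤ m j := hwmin (m j) ⟨j, ht0j, rfl⟩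
  have hfj_ge : w ≤ f j x := le_trans hmj (hmle j x hxT)
  have hfj : f j x = w := le_antisymm hfj_le hfj_ge
  have hlt : f (j + 1) x < w := by
    have h := hdec j
    rw [hjx'] at h
    rwa [hfj] at h
  have hmj1 : w ≤ m (j + 1) := hwmin (m (j + 1)) ⟨j + 1, by omega, rfl⟩
  have : m (j + 1) ≤ f (j + 1) x := hmle (j + 1) x hxT
  exact absurd (lt_of_le_of_lt (le_trans hmj1 this) hlt) (lt_irrefl w)
end

section
/- The 2D first-order Eikonal quadratic update d(v, h, t_H, t_V) = (t_H + t_V + sqrt((t_H + t_V)^2 − 2(t_H^2 + t_V^2 − (h/v)^2)))/2, defined when |t_H − t_V| < h/v, satisfies d(v, h, t_H, t_V) > max(t_H, t_V) (exact real arithmetic). -/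
/-- The 2D first-order Eikonal quadratic update exceeds both neighbor values
(in exact real arithmetic). -/
theorem eikonal_quadratic_update_gt_max
    (v h tH tV : ℝ) (hv : 0 < v) (hh : 0 < h)
    (htH : 0 ≤ tH) (htV : 0 ≤ tV)
    (hregion : |tH - tV| < h / v) :
    max tH tV <
      (tH + tV + Real.sqrt ((tH + tV) ^ 2 -
        2 * (tH ^ 2 + tV ^ 2 - (h / v) ^ 2))) / 2 := by
  have hD : (tH + tV) ^ 2 - 2 * (tH ^ 2 + tV ^ 2 - (h / v) ^ 2)
      = 2 * (h / v) ^ 2 - (tH - tV) ^ 2 := by ring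
  have h1 : (tH - tV) ^ 2 < (h / v) ^ 2 := by
    have := sq_abs (tH - tV)
    nlinarith [abs_nonneg (tH - tV), div_pos hh hv]
  have hgt : |tH - tV| < Real.sqrt ((tH + tV) ^ 2 -
      2 * (tH ^ 2 + tV ^ 2 - (h / v) ^ 2)) := by
    rw [hD]
    have : |tH - tV| = Real.sqrt ((tH - tV) ^ 2) := (Real.sqrt_sq_eq_abs _).symm
    rw [this]
    apply Real.sqrt_lt_sqrt (sq_nonneg _)
    nlinarith
  have hmax : max tH tV = (tH + tV + |tH - tV|) / 2 := by
    rcases le_total tH tV with hle | hle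
    · rw [max_eq_right hle, abs_of_nonpos (by linarith)]; ring
    · rw [max_eq_left hle, abs_of_nonneg (by linarith)]; ring
  rw [hmax]
  linarith
end

section
/- For the 2D Eikonal update rule: if |t_H − t_V| ≥ h/v, the one-dimensional update t = min(t_H, t_V) + h/v satisfies the upwind property t > min(t_H, t_V), and moreover the full update (quadratic update when |t_H − t_V| < h/v, one-dimensional update otherwise) is a nondecreasing function of (t_H, t_V) and its output always exceeds min(t_H, t_V). -/
/-- The full 2D Eikonal update: quadratic formula when `|t_H − t_V| < h/v`, and
the one-dimensional update `min(t_H, t_V) + h/v` otherwise. -/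
noncomputable def eikUpdate (v h tH tV : ℝ) : ℝ :=
  if |tH - tV| < h / v then
    (tH + tV + Real.sqrt (2 * (h / v) ^ 2 - (tH - tV) ^ 2)) / 2
  else
    min tH tV + h / v

private lemma eik_sq_lt (c a b : ℝ) (hd : |a - b| < c) : (a - b) ^ 2 < c ^ 2 := by
  nlinarith [sq_abs (a - b), abs_nonneg (a - b)]

private lemma eik_s_sq (c a b : ℝ) (hd : |a - b| < c) :
    (Real.sqrt (2 * c ^ 2 - (a - b) ^ 2)) ^ 2 = 2 * c ^ 2 - (a - b) ^ 2 :=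
  Real.sq_sqrt (by nlinarith [eik_sq_lt c a b hd])

private lemma eik_s_ge (c a b : ℝ) (hd : |a - b| < c) :
    |a - b| ≤ Real.sqrt (2 * c ^ 2 - (a - b) ^ 2) := by
  rw [← Real.sqrt_sq_eq_abs]
  exact Real.sqrt_le_sqrt (by nlinarith [eik_sq_lt c a b hd])

private lemma eik_max_le (c a b : ℝ) (hd : |a - b| < c) :
    max a b ≤ (a + b + Real.sqrt (2 * c ^ 2 - (a - b) ^ 2)) / 2 := by
  have hs := eik_s_ge c a b hd
  rcases le_total a b with h | h
  · rw [max_eq_right h]; rw [abs_of_nonpos (by linarith)] at hs; linarith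
  · rw [max_eq_left h]; rw [abs_of_nonneg (by linarith)] at hs; linarith

private lemma eik_quad_eq (c a b : ℝ) (hd : |a - b| < c) :
    (((a + b + Real.sqrt (2 * c ^ 2 - (a - b) ^ 2)) / 2) - a) ^ 2 +
    (((a + b + Real.sqrt (2 * c ^ 2 - (a - b) ^ 2)) / 2) - b) ^ 2 = c ^ 2 := by
  have hs := eik_s_sq c a b hd
  nlinarith [hs]

/-- Comparison lemma: any `t ≥ max a b` with `(t-a)²+(t-b)² ≥ c²` dominates the
quadratic update. -/
private lemma eik_key (c a b t : ℝ) (hd : |a - b| < c)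
    (ht : max a b ≤ t) (hF : c ^ 2 ≤ (t - a) ^ 2 + (t - b) ^ 2) :
    (a + b + Real.sqrt (2 * c ^ 2 - (a - b) ^ 2)) / 2 ≤ t := by
  by_contra hlt
  push_neg at hlt
  set Q := (a + b + Real.sqrt (2 * c ^ 2 - (a - b) ^ 2)) / 2 with hQ
  have heq := eik_quad_eq c a b hd
  have ha : a ≤ t := le_trans (le_max_left a b) ht
  have hb : b ≤ t := le_trans (le_max_right a b) ht
  nlinarith [mul_pos (sub_pos.mpr hlt) (by linarith : (0:ℝ) < Q + t - 2 * a),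
             mul_pos (sub_pos.mpr hlt) (by linarith : (0:ℝ) < Q + t - 2 * b)]

/-- The one-dimensional update satisfies the upwind property, and the full
update is nondecreasing in each argument and always exceeds `min(t_H, t_V)`. -/
theorem eikonal_full_update_monotone_and_upwind
    (v h : ℝ) (hv : 0 < v) (hh : 0 < h) :
    (∀ tH tV : ℝ, 0 ≤ tH → 0 ≤ tV → h / v ≤ |tH - tV| →
      min tH tV < min tH tV + h / v) ∧
    (∀ tH tV tH' tV' : ℝ, 0 ≤ tH' → 0 ≤ tV' → tH' ≤ tH → tV' ≤ tV →
      eikUpdate v h tH' tV' ≤ eikUpdate v h tH tV) ∧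
    (∀ tH tV : ℝ, 0 ≤ tH → 0 ≤ tV →
      min tH tV < eikUpdate v h tH tV) := by
  have hc : 0 < h / v := div_pos hh hv
  set c := h / v with hcdef
  refine ⟨fun tH tV _ _ _ => by linarith, ?_, ?_⟩
  · intro a b a' b' _ _ ha hb
    simp only [eikUpdate, ← hcdef]
    split_ifs with h1 h2 h2
    · -- both in quadratic region
      apply eik_key c a' b' _ h1
      · exact le_trans (max_le_max ha hb) (eik_max_le c a b h2)
      · have heq := eik_quad_eq c a b h2
        have hQa : a ≤ (a + b + Real.sqrt (2 * c ^ 2 - (a - b) ^ 2)) / 2 :=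
          le_trans (le_max_left a b) (eik_max_le c a b h2)
        have hQb : b ≤ (a + b + Real.sqrt (2 * c ^ 2 - (a - b) ^ 2)) / 2 :=
          le_trans (le_max_right a b) (eik_max_le c a b h2)
        nlinarith [heq]
    · -- (a',b') in region, (a,b) out: goal Q(a',b') ≤ min a b + c
      apply eik_key c a' b' _ h1
      · have habs : max a' b' - min a' b' = |a' - b'| := by
          rw [max_sub_min_eq_abs, abs_sub_comm]
        have hmin : min a' b' ≤ min a b := min_le_min ha hb
        rw [← habs] at h1; linarith
      · rcases le_total a b with hab | hab
        · have hma : min a b = a := min_eq_left hab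
          have : c ≤ min a b + c - a' := by rw [hma]; linarith
          nlinarith [sq_nonneg (min a b + c - b'), hc]
        · have hmb : min a b = b := min_eq_right hab
          have : c ≤ min a b + c - b' := by rw [hmb]; linarith
          nlinarith [sq_nonneg (min a b + c - a'), hc]
    · -- (a',b') out, (a,b) in: goal min a' b' + c ≤ Q(a,b)
      have habs : max a' b' - min a' b' = |a' - b'| := by
        rw [max_sub_min_eq_abs, abs_sub_comm]
      have h1' : c ≤ |a' - b'| := not_lt.mp h1
      have hstep : min a' b' + c ≤ max a' b' := by rw [← habs] at h1'; linarith
      calc min a' b' + c ≤ max a' b' := hstep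
        _ ≤ max a b := max_le_max ha hb
        _ ≤ _ := eik_max_le c a b h2
    · -- both out
      have := min_le_min ha hb
      linarith
  · intro a b _ _
    simp only [eikUpdate, ← hcdef]
    split_ifs with h1
    · have hs : 0 < Real.sqrt (2 * c ^ 2 - (a - b) ^ 2) :=
        Real.sqrt_pos.mpr (by nlinarith [eik_sq_lt c a b h1, hc])
      rcases le_total a b with hab | hab
      · rw [min_eq_left hab]; linarith
      · rw [min_eq_right hab]; linarith
    · linarith
end
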